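/- For every integer n ≥ 0, ∫_{[0,π]²} (2cosθ₁ + 2cosθ₂)^{2n+1} δ₂(θ₁,θ₂) dθ₁ dθ₂ = 0, and ∫_{[0,π]²} (2cosθ₁ + 2cosθ₂)^{2n} δ₂(θ₁,θ₂) dθ₁ dθ₂ = 6·(2n)!·(2n+2)! / (n!·(n+1)!·(n+2)!·(n+3)!). -/

import Mathlib

open MeasureTheory

/-- The Weyl density `δ₂` of `USp₄` on `[0,π]²`. -/
noncomputable def weylDensity2 (x y : ℝ) : ℝ :=
  (2 / Real.pi ^ 2) * Real.sin x ^ 2 * Real.sin y ^ 2 *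
    (2 * Real.cos y - 2 * Real.cos x) ^ 2

/-!
Multiplying by `2 cos x + 2 cos y` sends `cos (j x) cos (k y)` to the sum of its four neighbours
`(j ± 1, k)`, `(j, k ± 1)`. In the coordinates `j + k`, `j - k` these are the four pairs of `±1`
steps, so the integral of `(2 cos x + 2 cos y) ^ m cos (j x) cos (k y)` over `[0,π]²` is `π²`
times a product of two counts `W(m, ·) = walkCount m ·` of `±1` walks on `ℤ`. Expanding `δ₂` in
the products `cos (j x) cos (k y)`, `j, k ≤ 4`, turns the `m`-th moment into a quadratic form in
`W(m, 0)`, `W(m, 2)`, `W(m, 4)`, `W(m, 6)`; these vanish for odd `m` and equal `C(2n, n + i)` for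
`m = 2n`.
-/

open Real Set

def walkCount : ℕ → ℤ → ℕ
  | 0, j => if j = 0 then 1 else 0
  | m + 1, j => walkCount m (j + 1) + walkCount m (j - 1)

theorem walkCount_neg (m : ℕ) (j : ℤ) : walkCount m (-j) = walkCount m j := by
  induction m generalizing j with
  | zero => simp [walkCount]
  | succ m ih =>
    rw [walkCount, walkCount, ← ih (j - 1), ← ih (j + 1)]
    ring_nf

theorem exists_eq_sub_two_mul_of_walkCount_ne_zero {m : ℕ} {j : ℤ} (h : walkCount m j ≠ 0) :
    ∃ i ≤ m, j = m - 2 * i := by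
  induction m generalizing j with
  | zero => exact ⟨0, le_rfl, by simpa [walkCount] using h⟩
  | succ m ih =>
    rw [walkCount] at h
    rcases (by omega : walkCount m (j + 1) ≠ 0 ∨ walkCount m (j - 1) ≠ 0) with h | h
    · obtain ⟨i, hi, hj⟩ := ih h
      exact ⟨i + 1, by omega, by push_cast; linarith⟩
    · obtain ⟨i, hi, hj⟩ := ih h
      exact ⟨i, by omega, by push_cast; linarith⟩

theorem walkCount_sub_two_mul (m i : ℕ) : walkCount m (m - 2 * i) = m.choose i := by
  induction m generalizing i with
  | zero => cases i <;> simp [walkCount]; omega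
  | succ m ih =>
    rw [walkCount]
    cases i with
    | zero =>
      have : walkCount m (m + 1 + 1) = 0 := by
        by_contra h
        obtain ⟨i, -, hi⟩ := exists_eq_sub_two_mul_of_walkCount_ne_zero h
        omega
      simpa [add_sub_cancel_right, this] using ih 0
    | succ i =>
      rw [Nat.choose_succ_succ', ← ih, ← ih]
      push_cast
      ring_nf

theorem walkCount_two_mul_two_mul (n i : ℕ) :
    walkCount (2 * n) (2 * i) = (2 * n).choose (n + i) := by
  rw [← walkCount_neg, ← walkCount_sub_two_mul]
  push_cast
  ring_nf

theorem walkCount_two_mul_add_one_two_mul (n i : ℕ) : walkCount (2 * n + 1) (2 * i) = 0 := by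
  by_contra h
  obtain ⟨k, -, hk⟩ := exists_eq_sub_two_mul_of_walkCount_ne_zero h
  omega

theorem integral_cos_int_mul_Icc (j : ℤ) :
    ∫ x in Icc 0 π, cos (j * x) = if j = 0 then π else 0 := by
  rw [integral_Icc_eq_integral_Ioc, ← intervalIntegral.integral_of_le pi_pos.le]
  split_ifs with hj
  · simp [hj]
  · rw [intervalIntegral.integral_comp_mul_left cos (Int.cast_ne_zero.mpr hj), integral_cos]
    simp [sin_int_mul_pi]

theorem two_mul_cos_mul_cos_int_mul (x : ℝ) (j : ℤ) :
    2 * cos x * cos (j * x) = cos ((j + 1 : ℤ) * x) + cos ((j - 1 : ℤ) * x) := by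
  push_cast
  rw [add_mul, sub_mul, one_mul, cos_add, cos_sub]
  ring

theorem integrableOn_trace_pow_mul_cos_mul_cos (m : ℕ) (j k : ℤ) :
    IntegrableOn
      (fun θ : ℝ × ℝ => (2 * cos θ.1 + 2 * cos θ.2) ^ m * (cos (j * θ.1) * cos (k * θ.2)))
      (Icc 0 π ×ˢ Icc 0 π) :=
  (by fun_prop : Continuous _).continuousOn.integrableOn_compact (isCompact_Icc.prod isCompact_Icc)

theorem setIntegral_trace_pow_mul_cos_mul_cos (m : ℕ) (j k : ℤ) :
    ∫ θ in Icc 0 π ×ˢ Icc 0 π, (2 * cos θ.1 + 2 * cos θ.2) ^ m * (cos (j * θ.1) * cos (k * θ.2))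
      = π ^ 2 * walkCount m (j + k) * walkCount m (j - k) := by
  induction m generalizing j k with
  | zero =>
    simp only [pow_zero, one_mul]
    rw [Measure.volume_eq_prod, setIntegral_prod_mul (fun x => cos (j * x)) (fun y => cos (k * y)),
      integral_cos_int_mul_Icc, integral_cos_int_mul_Icc]
    simp only [walkCount]
    split_ifs <;> first | (exfalso; omega) | ring
  | succ m ih =>
    let f (a b : ℤ) (θ : ℝ × ℝ) : ℝ :=
      (2 * cos θ.1 + 2 * cos θ.2) ^ m * (cos (a * θ.1) * cos (b * θ.2))
    have hint (a b : ℤ) : IntegrableOn (f a b) (Icc 0 π ×ˢ Icc 0 π) :=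
      integrableOn_trace_pow_mul_cos_mul_cos m a b
    calc _ = ∫ θ in Icc 0 π ×ˢ Icc 0 π,
          (f (j + 1) k + f (j - 1) k + f j (k + 1) + f j (k - 1)) θ := by
          congr 1 with θ
          have h₁ := two_mul_cos_mul_cos_int_mul θ.1 j
          have h₂ := two_mul_cos_mul_cos_int_mul θ.2 k
          simp only [f, Pi.add_apply]
          linear_combination (2 * cos θ.1 + 2 * cos θ.2) ^ m *
            (cos (k * θ.2) * h₁ + cos (j * θ.1) * h₂)
      _ = π ^ 2 * walkCount (m + 1) (j + k) * walkCount (m + 1) (j - k) := by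
          rw [integral_add' (((hint _ _).add (hint _ _)).add (hint _ _)) (hint _ _),
            integral_add' ((hint _ _).add (hint _ _)) (hint _ _),
            integral_add' (hint _ _) (hint _ _)]
          simp only [f, ih, walkCount]
          push_cast
          ring_nf

def weylCoeff : Fin 5 → Fin 5 → ℝ :=
  ![![2, 0, -1, 0, -1],
    ![0, -2, 0, 2, 0],
    ![-1, 0, 0, 0, 1],
    ![0, 2, 0, -2, 0],
    ![-1, 0, 1, 0, 0]]

theorem weylDensity2_eq_sum (x y : ℝ) :
    weylDensity2 x y = (2 * π ^ 2)⁻¹ *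
      ∑ j : Fin 5, ∑ k : Fin 5,
        weylCoeff j k * (cos (((j : ℕ) : ℤ) * x) * cos (((k : ℕ) : ℤ) * y)) := by
  have cos_four_mul (t : ℝ) : cos (4 * t) = 2 * (2 * cos t ^ 2 - 1) ^ 2 - 1 := by
    rw [show 4 * t = 2 * (2 * t) by ring, cos_two_mul, cos_two_mul]
  simp only [Fin.sum_univ_five, weylCoeff, Fin.isValue, Matrix.cons_val', Matrix.cons_val_zero,
    Matrix.cons_val_fin_one, Fin.coe_ofNat_eq_mod, Nat.zero_mod, CharP.cast_eq_zero, Int.cast_zero,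
    zero_mul, cos_zero, mul_one, Matrix.cons_val_one, Nat.one_mod, Nat.cast_one, Int.cast_one,
    one_mul, add_zero, Matrix.cons_val, Nat.reduceMod, Nat.cast_ofNat, Int.cast_ofNat, neg_mul,
    Nat.mod_succ, zero_add]
  rw [cos_two_mul, cos_two_mul, cos_three_mul, cos_three_mul, cos_four_mul, cos_four_mul,
    weylDensity2, sin_sq, sin_sq]
  field_simp
  ring

def traceMomentPoly (w : ℕ → ℝ) : ℝ :=
  w 0 ^ 2 - w 1 ^ 2 - w 2 ^ 2 - w 0 * w 1 + 2 * w 1 * w 2 + w 1 * w 3 - w 0 * w 3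

theorem setIntegral_trace_pow_mul_weylDensity2 (m : ℕ) :
    ∫ θ in Icc 0 π ×ˢ Icc 0 π, (2 * cos θ.1 + 2 * cos θ.2) ^ m * weylDensity2 θ.1 θ.2
      = traceMomentPoly fun i => walkCount m (2 * i) := by
  have hint := integrableOn_trace_pow_mul_cos_mul_cos m
  simp_rw [weylDensity2_eq_sum, Finset.mul_sum, mul_left_comm _ (2 * π ^ 2)⁻¹,
    mul_left_comm _ (weylCoeff _ _)]
  rw [integral_finsetSum _ fun j _ => integrable_finsetSum _ fun k _ =>
    ((hint _ _).const_mul _).const_mul _]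
  simp_rw [integral_finsetSum _ fun k _ => ((hint _ _).const_mul _).const_mul _, integral_const_mul,
    setIntegral_trace_pow_mul_cos_mul_cos]
  simp [Fin.sum_univ_five, weylCoeff, walkCount_neg, traceMomentPoly]
  field_simp
  ring

theorem choose_two_mul_add_succ_mul (n i : ℕ) :
    ((2 * n).choose (n + i + 1) : ℝ) * (n + i + 1) = (2 * n).choose (n + i) * (n - i) := by
  rcases le_or_gt i n with h | h
  · have := Nat.choose_succ_right_eq (2 * n) (n + i)
    rw [show 2 * n - (n + i) = n - i by omega] at this
    exact_mod_cast this
  · rw [Nat.choose_eq_zero_of_lt (by omega : 2 * n < n + i + 1),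
      Nat.choose_eq_zero_of_lt (by omega : 2 * n < n + i)]
    simp

theorem traceMomentPoly_choose (n : ℕ) :
    traceMomentPoly (fun i => (2 * n).choose (n + i))
      = 6 * (2 * n).factorial * (2 * n + 2).factorial /
          (n.factorial * (n + 1).factorial * (n + 2).factorial * (n + 3).factorial) := by
  set b : ℕ → ℝ := fun i => (2 * n).choose (n + i)
  have hb (i : ℕ) : b (i + 1) = b i * (n - i) / (n + i + 1) := by
    rw [eq_div_iff (by positivity)]
    exact choose_two_mul_add_succ_mul n i
  have hb0 : b 0 * n.factorial * n.factorial = (2 * n).factorial := by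
    have := Nat.choose_mul_factorial_mul_factorial (by omega : n ≤ 2 * n)
    rw [show 2 * n - n = n by omega] at this
    simp only [b, add_zero]
    exact_mod_cast this
  simp only [Nat.factorial_succ, show 2 * n + 2 = 2 * n + 1 + 1 by ring]
  push_cast
  rw [traceMomentPoly, hb 2, hb 1, hb 0, ← hb0]
  field_simp
  ring

/-- The moments of the trace on `USp₄`: odd moments vanish and the even moments are
`M_{2n} = 6·(2n)!·(2n+2)!/(n!·(n+1)!·(n+2)!·(n+3)!)`. -/
theorem moments_trace_USp4 (n : ℕ) :
    (∫ θ in (Set.Icc (0 : ℝ) Real.pi) ×ˢ (Set.Icc (0 : ℝ) Real.pi),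
        (2 * Real.cos θ.1 + 2 * Real.cos θ.2) ^ (2 * n + 1) * weylDensity2 θ.1 θ.2) = 0 ∧
    (∫ θ in (Set.Icc (0 : ℝ) Real.pi) ×ˢ (Set.Icc (0 : ℝ) Real.pi),
        (2 * Real.cos θ.1 + 2 * Real.cos θ.2) ^ (2 * n) * weylDensity2 θ.1 θ.2)
      = 6 * (2 * n).factorial * (2 * n + 2).factorial /
          (n.factorial * (n + 1).factorial * (n + 2).factorial * (n + 3).factorial) := by
  refine ⟨?_, ?_⟩
  · rw [setIntegral_trace_pow_mul_weylDensity2]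
    simp only [traceMomentPoly, walkCount_two_mul_add_one_two_mul]
    norm_num
  · rw [setIntegral_trace_pow_mul_weylDensity2, ← traceMomentPoly_choose]
    simp only [walkCount_two_mul_two_mul]
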